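/- For every natural number d and every complex number x with -1 < Re x < 0, the integral ∫_0^∞ ((1-t)^d/(1+t)^{d+1})·t^{-x-1} dt (where for real t > 0, t^{-x-1} := exp((-x-1)·log t)) converges and equals -(π/sin(πx))·L_d(x). -/

import Mathlib

/-!
Expanding `(1 - t)^d` binomially turns the integral into a sum of Beta integrals
`∫₀^∞ t^(j-x-1) (1+t)^(-(d+1)) dt = Γ(j-x) Γ(d+1-j+x) / d!`, which the substitution
`t = u / (1 - u)` reduces to Euler's Beta integral on `(0, 1)`. The reflection formula turns
`Γ(j-x) Γ(1-j+x)` into `(-1)^(j+1) π / sin(πx)`, and `Γ(d+1-j+x) / Γ(1-j+x)` is the falling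
factorial `d! binom(d-j+x, d)`.
-/

/-- `binom(y, d) = (∏_{k=0}^{d-1} (y - k)) / d!` for complex `y`. -/
noncomputable def cbinom (y : ℂ) (d : ℕ) : ℂ :=
  (∏ k ∈ Finset.range d, (y - k)) / (Nat.factorial d : ℂ)

/-- The Ehrhart polynomial of the `d`-dimensional cross-polytope. -/
noncomputable def Lpoly (d : ℕ) (x : ℂ) : ℂ :=
  ∑ j ∈ Finset.range (d + 1), (Nat.choose d j : ℂ) * cbinom ((d : ℂ) - (j : ℂ) + x) d

open MeasureTheory Set Complex Finset
open scoped Nat Real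

theorem bijOn_div_one_sub : BijOn (fun u : ℝ => u / (1 - u)) (Ioo 0 1) (Ioi 0) := by
  refine InvOn.bijOn (f' := fun t => t / (1 + t)) ⟨fun u hu => ?_, fun t ht => ?_⟩
    (fun u hu => div_pos hu.1 (sub_pos.2 hu.2)) (fun t ht => ?_)
  · have : 1 - u ≠ 0 := (sub_pos.2 hu.2).ne'
    field_simp
    ring
  · have : (1 : ℝ) + t ≠ 0 := by have := mem_Ioi.1 ht; positivity
    field_simp
    ring
  · have ht : (0 : ℝ) < t := ht
    exact ⟨div_pos ht (by positivity), (div_lt_one (by positivity)).2 (by linarith)⟩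

theorem hasDerivAt_div_one_sub {u : ℝ} (hu : u ≠ 1) :
    HasDerivAt (fun u : ℝ => u / (1 - u)) ((1 - u) ^ 2)⁻¹ u := by
  have h : 1 - u ≠ 0 := sub_ne_zero.2 hu.symm
  refine ((hasDerivAt_id' u).div ((hasDerivAt_const u 1).sub (hasDerivAt_id' u)) h).congr_deriv
    ?_
  simp only [Pi.sub_apply]
  ring

theorem abs_deriv_div_one_sub_smul_cpow_mul_one_add_cpow {a c : ℂ} {u : ℝ}
    (hu : u ∈ Ioo (0 : ℝ) 1) :
    |((1 - u) ^ 2)⁻¹| •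
        (((u / (1 - u) : ℝ) : ℂ) ^ (a - 1) * (1 + ((u / (1 - u) : ℝ) : ℂ)) ^ (-c)) =
      (u : ℂ) ^ (a - 1) * (1 - (u : ℂ)) ^ (c - a - 1) := by
  obtain ⟨hu0, hu1⟩ := hu
  have hv : 0 < 1 - u := sub_pos.2 hu1
  have hv' : ((1 - u : ℝ) : ℂ) ≠ 0 := ofReal_ne_zero.2 hv.ne'
  have harg : ((1 - u : ℝ) : ℂ).arg ≠ Real.pi := by
    rw [arg_ofReal_of_nonneg hv.le]; exact Real.pi_ne_zero.symm
  have h1 : (1 : ℂ) + ((u / (1 - u) : ℝ) : ℂ) = (((1 - u)⁻¹ : ℝ) : ℂ) := by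
    have : (1 : ℂ) - u ≠ 0 := by exact_mod_cast hv.ne'
    push_cast; field_simp; ring
  rw [h1, div_eq_mul_inv, ofReal_mul, mul_cpow_ofReal_nonneg hu0.le (inv_nonneg.2 hv.le),
    ofReal_inv, inv_cpow _ _ harg, inv_cpow _ _ harg, abs_of_pos (by positivity), real_smul]
  have hv1 : (1 : ℂ) - u = ((1 - u : ℝ) : ℂ) := by push_cast; ring
  have hexp : ((1 - u : ℝ) : ℂ) ^ (c - a - 1) =
      ((1 - u : ℝ) : ℂ) ^ c / ((1 - u : ℝ) : ℂ) ^ (a - 1) / ((1 - u : ℝ) : ℂ) ^ 2 := by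
    rw [show c - a - 1 = c - (a - 1) - 2 by ring, cpow_sub _ _ hv', cpow_sub _ _ hv', cpow_ofNat]
  rw [hv1, hexp, cpow_neg, inv_inv, ofReal_inv, ofReal_pow]
  ring

theorem integrableOn_Ioi_cpow_mul_one_add_cpow {a c : ℂ} (ha : 0 < a.re) (hac : a.re < c.re) :
    IntegrableOn (fun t : ℝ => (t : ℂ) ^ (a - 1) * (1 + (t : ℂ)) ^ (-c)) (Ioi 0) := by
  have hca : 0 < (c - a).re := by rw [sub_re]; linarith
  rw [← bijOn_div_one_sub.image_eq, integrableOn_image_iff_integrableOn_abs_deriv_smul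
    measurableSet_Ioo (fun u hu => (hasDerivAt_div_one_sub hu.2.ne).hasDerivWithinAt)
    bijOn_div_one_sub.injOn]
  refine IntegrableOn.congr_fun ?_
    (fun u hu => (abs_deriv_div_one_sub_smul_cpow_mul_one_add_cpow hu).symm) measurableSet_Ioo
  exact (intervalIntegrable_iff_integrableOn_Ioo_of_le zero_le_one).1
    (betaIntegral_convergent ha hca)

theorem integral_Ioi_cpow_mul_one_add_cpow {a c : ℂ} (ha : 0 < a.re) (hac : a.re < c.re) :
    ∫ t in Ioi (0 : ℝ), (t : ℂ) ^ (a - 1) * (1 + (t : ℂ)) ^ (-c) =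
      Gamma a * Gamma (c - a) / Gamma c := by
  have hca : 0 < (c - a).re := by rw [sub_re]; linarith
  rw [← bijOn_div_one_sub.image_eq, integral_image_eq_integral_abs_deriv_smul
    measurableSet_Ioo (fun u hu => (hasDerivAt_div_one_sub hu.2.ne).hasDerivWithinAt)
    bijOn_div_one_sub.injOn,
    setIntegral_congr_fun measurableSet_Ioo
      fun u hu => abs_deriv_div_one_sub_smul_cpow_mul_one_add_cpow hu,
    ← integral_Ioc_eq_integral_Ioo, ← intervalIntegral.integral_of_le zero_le_one,
    Gamma_mul_Gamma_eq_betaIntegral ha hca, add_sub_cancel,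
    mul_div_cancel_left₀ _ (Gamma_ne_zero_of_re_pos (ha.trans hac))]
  rfl

theorem cbinom_eq_Gamma_div {y : ℂ} {d : ℕ} (hy : ∀ k : ℕ, y - d + 1 ≠ -k) :
    cbinom y d = Gamma (y + 1) / (Gamma (y - d + 1) * d !) := by
  rw [cbinom, ← descPochhammer_eval_eq_prod_range, descPochhammer_eval_eq_ascPochhammer,
    ← Gamma_add_nat_div_Gamma_eq _ hy, div_div, show y - d + 1 + d = y + 1 by ring]

theorem Gamma_nat_sub_mul_Gamma_one_sub (j : ℕ) (x : ℂ) :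
    Gamma (j - x) * Gamma (1 - (j - x)) = (-1) ^ (j + 1) * (π / sin (π * x)) := by
  rw [Gamma_mul_Gamma_one_sub, show (π : ℂ) * (j - x) = j * π - π * x by ring,
    sin_antiperiodic.nat_mul_sub_eq, sin_neg]
  simp only [div_eq_mul_inv, mul_inv, ← inv_pow, inv_neg]
  ring

theorem one_sub_pow_div_mul_exp_log_eq_sum (d : ℕ) (x : ℂ) {t : ℝ} (ht : 0 < t) :
    (1 - (t : ℂ)) ^ d / (1 + (t : ℂ)) ^ (d + 1) * exp ((-x - 1) * (Real.log t : ℂ)) =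
      ∑ j ∈ range (d + 1), (d.choose j : ℂ) * (-1) ^ j *
        ((t : ℂ) ^ ((j - x) - 1) * (1 + (t : ℂ)) ^ (-(d + 1 : ℂ))) := by
  have ht' : (t : ℂ) ≠ 0 := ofReal_ne_zero.2 ht.ne'
  have hexp : exp ((-x - 1) * (Real.log t : ℂ)) = (t : ℂ) ^ (-x - 1) := by
    rw [cpow_def_of_ne_zero ht', ofReal_log ht.le, mul_comm]
  have hpow : (1 + (t : ℂ)) ^ (-(d + 1 : ℂ)) = ((1 + (t : ℂ)) ^ (d + 1))⁻¹ := by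
    rw [cpow_neg, ← Nat.cast_add_one, cpow_natCast]
  rw [hexp, hpow, sub_eq_neg_add, add_pow, sum_div, sum_mul]
  refine sum_congr rfl fun j _ => ?_
  rw [show (j : ℂ) - x - 1 = j + (-x - 1) by ring, cpow_add _ _ ht', cpow_natCast, neg_pow]
  ring

theorem neg_one_pow_mul_Gamma_mul_Gamma_div_factorial (j d : ℕ) {x : ℂ}
    (hx : ∀ n : ℤ, x ≠ n) :
    (-1) ^ j * (Gamma (j - x) * Gamma (d + 1 - (j - x)) / d !) =
      -(π / sin (π * x)) * cbinom (d - j + x) d := by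
  have hy : ∀ k : ℕ, (d - j + x : ℂ) - d + 1 ≠ -k := fun k h =>
    hx (j - 1 - k) (by push_cast; linear_combination h)
  have hΓ : Gamma (1 - (j - x)) ≠ 0 := Gamma_ne_zero fun k h => hy k (by rw [← h]; ring)
  have hsign : -(π / sin (π * x)) = (-1) ^ j * (Gamma (j - x) * Gamma (1 - (j - x))) := by
    rw [Gamma_nat_sub_mul_Gamma_one_sub, ← mul_assoc, ← pow_add,
      show j + (j + 1) = 2 * j + 1 by ring, pow_succ, pow_mul, neg_one_sq, one_pow]
    ring
  rw [hsign, cbinom_eq_Gamma_div hy, show (d - j + x : ℂ) + 1 = d + 1 - (j - x) by ring,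
    show (d - j + x : ℂ) - d + 1 = 1 - (j - x) by ring]
  field_simp

theorem mellin_integral_eq_ehrhart (d : ℕ) (x : ℂ) (h1 : -1 < x.re) (h2 : x.re < 0) :
    MeasureTheory.IntegrableOn
        (fun t : ℝ => ((1 - (t : ℂ)) ^ d / (1 + (t : ℂ)) ^ (d + 1)) *
          Complex.exp ((-x - 1) * (Real.log t : ℂ)))
        (Set.Ioi 0) ∧
      (∫ t in Set.Ioi (0 : ℝ), ((1 - (t : ℂ)) ^ d / (1 + (t : ℂ)) ^ (d + 1)) *
          Complex.exp ((-x - 1) * (Real.log t : ℂ)))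
        = -((Real.pi : ℂ) / Complex.sin (Real.pi * x)) * Lpoly d x := by
  have hx : ∀ n : ℤ, x ≠ n := fun n hn => by
    have hre : x.re = n := by simpa using congrArg re hn
    rw [hre] at h1 h2
    have : -1 < n := by exact_mod_cast h1
    have : n < 0 := by exact_mod_cast h2
    omega
  have hterm : ∀ j ∈ range (d + 1),
      0 < ((j : ℂ) - x).re ∧ ((j : ℂ) - x).re < ((d : ℂ) + 1).re := fun j hj => by
    have : (j : ℝ) ≤ d := by exact_mod_cast mem_range_succ_iff.1 hj
    simp only [sub_re, add_re, natCast_re, one_re]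
    constructor <;> linarith
  have hint : ∀ j ∈ range (d + 1), IntegrableOn (fun t : ℝ => (d.choose j : ℂ) * (-1) ^ j *
      ((t : ℂ) ^ ((j - x) - 1) * (1 + (t : ℂ)) ^ (-(d + 1 : ℂ)))) (Ioi 0) := fun j hj =>
    (integrableOn_Ioi_cpow_mul_one_add_cpow (hterm j hj).1 (hterm j hj).2).const_mul _
  have hsum := fun t (ht : t ∈ Ioi (0 : ℝ)) => one_sub_pow_div_mul_exp_log_eq_sum d x ht
  refine ⟨IntegrableOn.congr_fun (integrable_finsetSum _ hint) (fun t ht => (hsum t ht).symm)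
    measurableSet_Ioi, ?_⟩
  rw [setIntegral_congr_fun measurableSet_Ioi hsum, integral_finsetSum _ hint, Lpoly, mul_sum]
  refine sum_congr rfl fun j hj => ?_
  rw [integral_const_mul, integral_Ioi_cpow_mul_one_add_cpow (hterm j hj).1 (hterm j hj).2,
    Gamma_nat_eq_factorial, mul_assoc, neg_one_pow_mul_Gamma_mul_Gamma_div_factorial j d hx]
  ring
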